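/- Let N ≥ 1, μ > 0, ν = 1/(1 + 4N²μ²), and Δ_{N−1} = 1 + 4(N−1)Nμ². Let f : ℝ^d → ℝ ∪ {∞} be closed, convex, proper and g : ℝ^d → ℝ ∪ {∞} be closed, proper, μ-strongly convex, with primal-dual solution (x⋆, u⋆) satisfying u⋆ ∈ ∂g(x⋆), −u⋆ ∈ ∂f(x⋆). Let x_{N−1}, w_{N−1}, y_N, w_N, x_N be FDR iterates, and set g'(y_N) = (2x_{N−1} − w_{N−1} − y_N)/η_{N−1} ∈ ∂g(y_N) and f'(x_N) = (w_N − x_N)/η_N ∈ ∂f(x_N). Then ‖x_N − x⋆‖² + 4N²μ²ν²‖u⋆ + f'(x_N)‖² ≤ ν²‖Δ_{N−1} x⋆ + 2Nμ u⋆ − Δ_{N−1}(2x_{N−1} − w_{N−1})‖². -/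

import Mathlib

noncomputable section

open scoped RealInnerProductSpace
open Finset

variable {E : Type*} [NormedAddCommGroup E] [InnerProductSpace ℝ E]

/-- An extended-real-valued function is proper: never `⊥` and finite somewhere. -/
def ProperFn (f : E → EReal) : Prop :=
  (∀ x, f x ≠ ⊥) ∧ ∃ x, f x ≠ ⊤

/-- An extended-real-valued function is closed: its epigraph is closed. -/
def ClosedFn (f : E → EReal) : Prop :=
  IsClosed {p : E × ℝ | f p.1 ≤ (p.2 : EReal)}

/-- Convexity for extended-real-valued functions. -/
def ConvexFn (f : E → EReal) : Prop :=
  ∀ x y : E, ∀ a b : ℝ, 0 ≤ a → 0 ≤ b → a + b = 1 →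
    f (a • x + b • y) ≤ (a : EReal) * f x + (b : EReal) * f y

/-- `g` is `μ`-strongly convex iff `g - (μ/2)‖·‖²` is convex. -/
def StrongConvexFn (μ : ℝ) (g : E → EReal) : Prop :=
  ConvexFn (fun x => g x - (((μ / 2) * ‖x‖ ^ 2 : ℝ) : EReal))

/-- `v` is a subgradient of `f` at `x`. -/
def SubdiffAt (f : E → EReal) (x v : E) : Prop :=
  ∀ y, f x + ((⟪v, y - x⟫ : ℝ) : EReal) ≤ f y

/-- `p` is a proximal point of `f` with stepsize `γ` at `x`, i.e. `p` minimizes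
`z ↦ f z + (1/(2γ))‖z - x‖²`. For closed proper convex `f` and `γ > 0` this
point is unique, i.e. `p = prox_{γ f}(x)`. -/
def IsProx (γ : ℝ) (f : E → EReal) (x p : E) : Prop :=
  ∀ z, f p + ((1 / (2 * γ) * ‖p - x‖ ^ 2 : ℝ) : EReal)
      ≤ f z + ((1 / (2 * γ) * ‖z - x‖ ^ 2 : ℝ) : EReal)

lemma subdiff_finite {f : E → EReal} (hp : ProperFn f) {x v : E} (h : SubdiffAt f x v) :
    ∃ r : ℝ, f x = (r : EReal) := by
  obtain ⟨hbot, p, hp'⟩ := hp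
  have hx_ne_top : f x ≠ ⊤ := by
    intro htop
    have h2 := h p
    rw [htop, EReal.top_add_coe] at h2
    exact hp' (top_le_iff.mp h2)
  exact ⟨(f x).toReal, (EReal.coe_toReal hx_ne_top (hbot x)).symm⟩

lemma subdiff_real {f : E → EReal} {x y u : E} {rx ry : ℝ}
    (hx : f x = (rx : EReal)) (hy : f y = (ry : EReal)) (h : SubdiffAt f x u) :
    rx + ⟪u, y - x⟫ ≤ ry := by
  have h2 := h y
  rw [hx, hy, ← EReal.coe_add] at h2
  exact_mod_cast h2

lemma conv_mono {f : E → EReal} (hp : ProperFn f) {x y u v : E}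
    (hu : SubdiffAt f x u) (hv : SubdiffAt f y v) :
    0 ≤ ⟪v - u, y - x⟫ := by
  obtain ⟨rx, hrx⟩ := subdiff_finite hp hu
  obtain ⟨ry, hry⟩ := subdiff_finite hp hv
  have h1 := subdiff_real hrx hry hu
  have h2 := subdiff_real hry hrx hv
  have e1 : ⟪v, x - y⟫ = ⟪v, x⟫ - ⟪v, y⟫ := inner_sub_right _ _ _
  have e2 : ⟪u, y - x⟫ = ⟪u, y⟫ - ⟪u, x⟫ := inner_sub_right _ _ _
  have e3 : ⟪v - u, y - x⟫ = (⟪v, y⟫ - ⟪v, x⟫) - (⟪u, y⟫ - ⟪u, x⟫) := by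
    rw [inner_sub_left, inner_sub_right, inner_sub_right]
  linarith

lemma strong_subgrad {μ : ℝ} (hμ : 0 ≤ μ) {g : E → EReal}
    (hsc : StrongConvexFn μ g) {x y u : E} {rx ry : ℝ}
    (hgx : g x = (rx : EReal)) (hgy : g y = (ry : EReal)) (hu : SubdiffAt g x u) :
    rx + ⟪u, y - x⟫ + μ / 2 * ‖y - x‖ ^ 2 ≤ ry := by
  set I := (⟪u, y - x⟫ : ℝ) with hI
  set D2 := ‖y - x‖ ^ 2 with hD2
  have key : ∀ t : ℝ, 0 < t → t < 1 → I + μ / 2 * (1 - t) * D2 ≤ ry - rx := by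
    intro t ht ht1
    set z := (1 - t) • x + t • y with hzdef
    have hzx : z - x = t • (y - x) := by rw [hzdef]; module
    have h1 := hu z
    rw [hgx, hzx, real_inner_smul_right, ← EReal.coe_add] at h1
    have h2 := hsc x y (1 - t) t (by linarith) (le_of_lt ht) (by ring)
    simp only [hgx, hgy, ← EReal.coe_mul, ← EReal.coe_sub, ← EReal.coe_add, ← hzdef] at h2
    have h3 : g z ≤ (((1 - t) * (rx - μ / 2 * ‖x‖ ^ 2) + t * (ry - μ / 2 * ‖y‖ ^ 2)
        + μ / 2 * ‖z‖ ^ 2 : ℝ) : EReal) := by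
      have h4 := add_le_add_left h2 ((μ / 2 * ‖z‖ ^ 2 : ℝ) : EReal)
      rwa [EReal.sub_add_cancel, ← EReal.coe_add] at h4
    have h5 : (rx + t * I : ℝ) ≤ ((1 - t) * (rx - μ / 2 * ‖x‖ ^ 2) + t * (ry - μ / 2 * ‖y‖ ^ 2)
        + μ / 2 * ‖z‖ ^ 2 : ℝ) := by exact_mod_cast h1.trans h3
    have hz2 : ‖z‖ ^ 2 = (1 - t) ^ 2 * ‖x‖ ^ 2 + 2 * (1 - t) * t * ⟪x, y⟫ + t ^ 2 * ‖y‖ ^ 2 := by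
      simp only [hzdef, ← real_inner_self_eq_norm_sq, inner_add_left, inner_add_right,
        real_inner_smul_left, real_inner_smul_right, real_inner_comm y x]
      ring
    have hd2 : D2 = ‖y‖ ^ 2 - 2 * ⟪x, y⟫ + ‖x‖ ^ 2 := by
      simp only [hD2, ← real_inner_self_eq_norm_sq, inner_sub_left, inner_sub_right,
        real_inner_comm y x]
      ring
    have h6 : t * (I + μ / 2 * (1 - t) * D2) ≤ t * (ry - rx) := by
      rw [hd2]; nlinarith [h5, hz2]
    have := (mul_le_mul_iff_right₀ ht).mp h6
    linarith
  by_contra hcon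
  push_neg at hcon
  set ε := rx + I + μ / 2 * D2 - ry with hε
  have hε0 : 0 < ε := by simp only [hε]; linarith
  set c := μ / 2 * D2 with hc
  have hc0 : 0 ≤ c := by
    have h7 : (0:ℝ) ≤ D2 := by positivity
    have := mul_nonneg (by linarith : (0:ℝ) ≤ μ / 2) h7
    linarith
  have hc1 : (0:ℝ) < c + 1 := by linarith
  set t := min (1/2 : ℝ) (ε / (c + 1)) with htdef
  have ht0 : 0 < t := lt_min (by norm_num) (div_pos hε0 hc1)
  have ht1 : t < 1 := lt_of_le_of_lt (min_le_left _ _) (by norm_num)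
  have hk := key t ht0 ht1
  have htc : t * c ≤ ε / (c + 1) * c := mul_le_mul_of_nonneg_right (min_le_right _ _) hc0
  have hlt : ε / (c + 1) * c < ε := by
    rw [div_mul_eq_mul_div, div_lt_iff₀ hc1]
    nlinarith
  have : I + c - t * c ≤ ry - rx := by
    have : μ / 2 * (1 - t) * D2 = c - t * c := by rw [hc]; ring
    linarith [hk, this.symm.le, this.le]
  have hεtc : ε ≤ t * c := by linarith
  exact absurd hεtc (not_le.mpr (lt_of_le_of_lt htc hlt))

lemma strong_mono {μ : ℝ} (hμ : 0 ≤ μ) {g : E → EReal} (hp : ProperFn g)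
    (hsc : StrongConvexFn μ g) {x y u v : E}
    (hu : SubdiffAt g x u) (hv : SubdiffAt g y v) :
    μ * ‖y - x‖ ^ 2 ≤ ⟪v - u, y - x⟫ := by
  obtain ⟨rx, hrx⟩ := subdiff_finite hp hu
  obtain ⟨ry, hry⟩ := subdiff_finite hp hv
  have h1 := strong_subgrad hμ hsc hrx hry hu
  have h2 := strong_subgrad hμ hsc hry hrx hv
  have e2 : ‖x - y‖ = ‖y - x‖ := norm_sub_rev _ _
  have e3 : ⟪v - u, y - x⟫ = (⟪v, y⟫ - ⟪v, x⟫) - (⟪u, y⟫ - ⟪u, x⟫) := by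
    rw [inner_sub_left, inner_sub_right, inner_sub_right]
  have e4 : ⟪u, y - x⟫ = ⟪u, y⟫ - ⟪u, x⟫ := inner_sub_right _ _ _
  have e5 : ⟪v, x - y⟫ = ⟪v, x⟫ - ⟪v, y⟫ := inner_sub_right _ _ _
  rw [e2] at h2
  linarith


set_option maxHeartbeats 2000000 in
/-- Case 4 of the Lyapunov argument: `V_N ≤ V_{N-1}`, `N ≥ 1`.
Here `Δ_{N-1} = 1 + 4(N-1)Nμ²`, and
`g'(y_N) = (2x_{N-1} - w_{N-1} - y_N)/η_{N-1} ∈ ∂g(y_N)`,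
`f'(x_N) = (w_N - x_N)/η_N ∈ ∂f(x_N)`. -/
theorem lyapunov_case4 {d : ℕ} (N : ℕ) (hN : 1 ≤ N) (μ : ℝ) (hμ : 0 < μ)
    (ν : ℝ) (hν : ν = 1 / (1 + 4 * (N : ℝ) ^ 2 * μ ^ 2))
    (f g : EuclideanSpace ℝ (Fin d) → EReal)
    (hfcl : ClosedFn f) (hfcv : ConvexFn f) (hfpr : ProperFn f)
    (hgcl : ClosedFn g) (hgpr : ProperFn g) (hgsc : StrongConvexFn μ g)
    (xs us : EuclideanSpace ℝ (Fin d))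
    (hgsub : SubdiffAt g xs us)
    (hfsub : SubdiffAt f xs (-us))
    (x0 u0 : EuclideanSpace ℝ (Fin d))
    (η : ℕ → ℝ)
    (hη : ∀ j, η j = 2 * (N : ℝ) * μ / (1 + 4 * (j : ℝ) * (N : ℝ) * μ ^ 2))
    (x w y : ℕ → EuclideanSpace ℝ (Fin d))
    (hx0 : x 0 = x0)
    (hw0 : w 0 = x0 - η 0 • u0)
    (hy : ∀ j < N, IsProx (η j) g ((2 : ℝ) • x j - w j) (y (j + 1)))
    (hw : ∀ j < N,
      w (j + 1) = (1 + η (j + 1) / η j) • y (j + 1)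
        - (η (j + 1) / η j) • ((2 : ℝ) • x j - w j))
    (hx : ∀ j < N, IsProx (η (j + 1)) f (w (j + 1)) (x (j + 1)))
    (hgyN : SubdiffAt g (y N)
      ((1 / η (N - 1)) • ((2 : ℝ) • x (N - 1) - w (N - 1) - y N)))
    (hfxN : SubdiffAt f (x N) ((1 / η N) • (w N - x N))) :
    ‖x N - xs‖ ^ 2
        + 4 * (N : ℝ) ^ 2 * μ ^ 2 * ν ^ 2 * ‖us + (1 / η N) • (w N - x N)‖ ^ 2
      ≤ ν ^ 2 * ‖(1 + 4 * ((N : ℝ) - 1) * (N : ℝ) * μ ^ 2) • xs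
        + (2 * (N : ℝ) * μ) • us
        - (1 + 4 * ((N : ℝ) - 1) * (N : ℝ) * μ ^ 2)
            • ((2 : ℝ) • x (N - 1) - w (N - 1))‖ ^ 2 := by
  -- scalar setup
  have hNR : (1:ℝ) ≤ (N:ℝ) := by exact_mod_cast hN
  set s : ℝ := 2 * (N : ℝ) * μ with hs
  set Δ : ℝ := 1 + 4 * ((N : ℝ) - 1) * (N : ℝ) * μ ^ 2 with hΔ
  set z := (2 : ℝ) • x (N - 1) - w (N - 1) with hzdef
  set g' := (1 / η (N - 1)) • (z - y N) with hg'def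
  set f' := (1 / η N) • (w N - x N) with hf'def
  set a := y N - xs with hadef
  set b := g' - us with hbdef
  set c := us + f' with hcdef
  clear_value s Δ z g' f' a b c
  have hs0 : 0 < s := by
    have : (0:ℝ) < (N:ℝ) := by linarith
    rw [hs]; positivity
  have hΔ' : Δ = 1 + s ^ 2 - 2 * s * μ := by rw [hΔ, hs]; ring
  have hΔ0 : 0 < Δ := by rw [hΔ]; nlinarith [sq_nonneg μ]
  have h1s : (0:ℝ) < 1 + s ^ 2 := by positivity
  have hν' : ν = 1 / (1 + s ^ 2) := by rw [hν, hs]; ring_nf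
  have hν0 : 0 < ν := by rw [hν']; positivity
  have hνe : ν * (1 + s ^ 2) = 1 := by rw [hν']; field_simp
  have hcastN1 : ((N - 1 : ℕ) : ℝ) = (N : ℝ) - 1 := by
    have := Nat.cast_sub (R := ℝ) hN
    simpa using this
  have hηN : η N = s * ν := by
    rw [hη N, hν']
    rw [mul_one_div]
    congr 1
    rw [hs]; ring
  have hηN1 : η (N - 1) = s / Δ := by
    rw [hη (N - 1), hcastN1, hΔ]
  have hηN1pos : 0 < η (N - 1) := by rw [hηN1]; positivity
  have hηNpos : 0 < η N := by rw [hηN]; positivity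
  -- vector identities
  have hNsub : N - 1 + 1 = N := Nat.sub_add_cancel hN
  have hwN := hw (N - 1) (by omega)
  rw [hNsub, ← hzdef] at hwN
  have hzy : η (N - 1) • g' = z - y N := by
    rw [hg'def, smul_smul, mul_one_div, div_self (ne_of_gt hηN1pos), one_smul]
  have hfx : η N • f' = w N - x N := by
    rw [hf'def, smul_smul, mul_one_div, div_self (ne_of_gt hηNpos), one_smul]
  have hz' : z = y N + η (N - 1) • g' := by rw [hzy]; abel
  have hxNw : x N = w N - η N • f' := by rw [hfx]; abel
  have hne : η (N - 1) ≠ 0 := ne_of_gt hηN1pos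
  have hr : (η N / η (N - 1)) • (η (N - 1) • g') = η N • g' := by
    rw [smul_smul, div_mul_cancel₀ _ hne]
  have hwN' : w N = y N - η N • g' := by
    rw [hwN, hz', smul_add, hr, add_smul, one_smul]
    abel
  have hxNv : x N - xs = a - (s * ν) • b - (s * ν) • c := by
    have habc : a - (s * ν) • b - (s * ν) • c = y N - η N • g' - η N • f' - xs := by
      rw [← hηN, hadef, hbdef, hcdef, smul_sub, smul_add]
      abel
    rw [habc, hxNw, hwN']
  have hRv : Δ • xs + s • us - Δ • z = -(Δ • a + s • b) := by
    have hsΔ : Δ • (η (N - 1) • g') = s • g' := by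
      rw [smul_smul, hηN1, mul_comm, div_mul_cancel₀ _ hΔ0.ne']
    rw [hz', hadef, hbdef, smul_add, hsΔ, smul_sub, smul_sub]
    abel
  -- inequalities
  have H1 : μ * ‖a‖ ^ 2 ≤ ⟪a, b⟫ := by
    have h := strong_mono hμ.le hgpr hgsc hgsub hgyN
    rwa [← hadef, ← hbdef, real_inner_comm a b] at h
  have H2 : 0 ≤ ⟪c, x N - xs⟫ := by
    have h := conv_mono hfpr hfsub hfxN
    have he : f' - -us = c := by rw [hcdef]; abel
    rwa [he] at h
  rw [hxNv] at H2
  have H2' : 0 ≤ ⟪a, c⟫ - s * ν * ⟪b, c⟫ - s * ν * ‖c‖ ^ 2 := by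
    have he : ⟪c, a - (s * ν) • b - (s * ν) • c⟫
        = ⟪a, c⟫ - s * ν * ⟪b, c⟫ - s * ν * ‖c‖ ^ 2 := by
      simp only [inner_sub_right, real_inner_smul_right, real_inner_comm c a,
        real_inner_comm c b, real_inner_self_eq_norm_sq]
    linarith [H2, he.symm.le, he.le]
  -- norm expansions
  have exp1 : ‖a - (s * ν) • b - (s * ν) • c‖ ^ 2
      = ‖a‖ ^ 2 - 2 * (s * ν) * ⟪a, b⟫ - 2 * (s * ν) * ⟪a, c⟫
        + (s * ν) ^ 2 * ‖b‖ ^ 2 + 2 * (s * ν) ^ 2 * ⟪b, c⟫ + (s * ν) ^ 2 * ‖c‖ ^ 2 := by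
    simp only [← real_inner_self_eq_norm_sq, inner_sub_left, inner_sub_right,
      real_inner_smul_left, real_inner_smul_right, real_inner_comm b a,
      real_inner_comm c a, real_inner_comm c b]
    ring
  have exp3 : ‖Δ • a + s • b‖ ^ 2
      = Δ ^ 2 * ‖a‖ ^ 2 + 2 * Δ * s * ⟪a, b⟫ + s ^ 2 * ‖b‖ ^ 2 := by
    simp only [← real_inner_self_eq_norm_sq, inner_add_left, inner_add_right,
      real_inner_smul_left, real_inner_smul_right, real_inner_comm b a]
    ring
  have hs2 : 4 * (N : ℝ) ^ 2 * μ ^ 2 = s ^ 2 := by rw [hs]; ring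
  rw [hxNv, hRv, norm_neg, hs2, exp1, exp3]
  -- final algebra
  have hkey : ν ^ 2 * (Δ ^ 2 * ‖a‖ ^ 2 + 2 * Δ * s * ⟪a, b⟫ + s ^ 2 * ‖b‖ ^ 2)
      - ((‖a‖ ^ 2 - 2 * (s * ν) * ⟪a, b⟫ - 2 * (s * ν) * ⟪a, c⟫
        + (s * ν) ^ 2 * ‖b‖ ^ 2 + 2 * (s * ν) ^ 2 * ⟪b, c⟫ + (s * ν) ^ 2 * ‖c‖ ^ 2)
        + s ^ 2 * ν ^ 2 * ‖c‖ ^ 2)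
      = 2 * s * ν * (Δ * ν + 1) * (⟪a, b⟫ - μ * ‖a‖ ^ 2)
        + 2 * s * ν * (⟪a, c⟫ - s * ν * ⟪b, c⟫ - s * ν * ‖c‖ ^ 2) := by
    rw [hΔ', hν']
    field_simp
    ring
  have hfac1 : 0 ≤ 2 * s * ν * (Δ * ν + 1) * (⟪a, b⟫ - μ * ‖a‖ ^ 2) := by
    apply mul_nonneg
    · positivity
    · linarith
  have hfac2 : 0 ≤ 2 * s * ν * (⟪a, c⟫ - s * ν * ⟪b, c⟫ - s * ν * ‖c‖ ^ 2) := by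
    apply mul_nonneg
    · positivity
    · linarith
  linarith [hkey, hfac1, hfac2]
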